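/- arXiv:1810.12935 — 6 statements merged into one kernel-verified Lean document; each statement's English description precedes it below -/
import Mathlib

section
/- Let c be a nonzero complex number and let A = ℂ⟨u,v⟩/(u² − c·v²). Then the images in A of the monomials u^i (v·u)^j v^ℓ, where i and j range over all nonnegative integers and ℓ ∈ {0,1}, form a basis of A as a ℂ-vector space (they are linearly independent and span A). -/
/-! Lemma 1.3 of Ferraro–Kirkman–Moore–Won: a basis for `ℂ⟨u,v⟩/(u² - c v²)`. -/

noncomputable section

open FreeAlgebra

/-- The relation `u² = c • v²` on the free algebra `ℂ⟨u,v⟩`; quotienting by it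
is the same as quotienting by the two-sided ideal generated by `u² - c v²`. -/
inductive Stmt2.Rel (c : ℂ) : FreeAlgebra ℂ (Fin 2) → FreeAlgebra ℂ (Fin 2) → Prop
  | main : Stmt2.Rel c (ι ℂ 0 * ι ℂ 0) (c • (ι ℂ 1 * ι ℂ 1))

/-- The algebra `A = ℂ⟨u,v⟩/(u² - c v²)`. -/
abbrev Stmt2.A (c : ℂ) := RingQuot (Stmt2.Rel c)

/-- The image of `u` in `A`. -/
def Stmt2.u (c : ℂ) : Stmt2.A c := RingQuot.mkAlgHom ℂ (Stmt2.Rel c) (ι ℂ 0)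

/-- The image of `v` in `A`. -/
def Stmt2.v (c : ℂ) : Stmt2.A c := RingQuot.mkAlgHom ℂ (Stmt2.Rel c) (ι ℂ 1)


/-!
Writing `m = (i, j, ℓ)` for the monomial `u^i (vu)^j v^ℓ`, the relation `u² = c v²` makes `u²`
central and lets one rewrite `v · u^i (vu)^j v^ℓ` as a scalar multiple of another such monomial
(`vStep`). Hence the span of the monomials is a left ideal containing `1`, so it is everything.
For independence, the same rewriting rules define operators `U`, `V` on the vector space with
basis indexed by the monomials; they satisfy `U² = c V²`, so `A` acts on that space, and applying
`u^i (vu)^j v^ℓ` to the basis vector `e₀` gives the basis vector `e_(i,j,ℓ)`.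
-/

/-- `vStep c m = (a, m')` encodes the rule `v · u^i (vu)^j v^ℓ = a • u^i' (vu)^j' v^ℓ'`
for `m = (i, j, ℓ)`, `m' = (i', j', ℓ')`, valid when `u² = c v²`. -/
def vStep {K : Type*} [Field K] (c : K) (m : ℕ × ℕ × Fin 2) : K × (ℕ × ℕ × Fin 2) :=
  if m.1 % 2 = 1 then (1, (m.1 - 1, m.2.1 + 1, m.2.2))
  else if m.2.1 ≠ 0 then (c⁻¹, (m.1 + 3, m.2.1 - 1, m.2.2))
  else if m.2.2 = 0 then (1, (m.1, 0, 1))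
  else (c⁻¹, (m.1 + 2, 0, 0))

section VStep

variable {K : Type*} [Field K] (c : K)

lemma vStep_add_two (m : ℕ × ℕ × Fin 2) :
    vStep c (m.1 + 2, m.2) = ((vStep c m).1, ((vStep c m).2.1 + 2, (vStep c m).2.2)) := by
  simp only [vStep, Nat.add_mod_right]
  split_ifs
  · simp only [Prod.mk.injEq, true_and, and_true]
    omega
  all_goals rfl

lemma vStep_vStep (m : ℕ × ℕ × Fin 2) :
    (vStep c m).1 * (vStep c (vStep c m).2).1 = c⁻¹ ∧
      (vStep c (vStep c m).2).2 = (m.1 + 2, m.2) := by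
  obtain ⟨i, j, l⟩ := m
  induction i using Nat.twoStepInduction with
  | zero => rcases j with _ | j <;> fin_cases l <;> simp [vStep]
  | one => simp [vStep]
  | more i ih _ =>
    rw [show ((i + 2, j, l) : ℕ × ℕ × Fin 2) = ((i, j, l).1 + 2, (i, j, l).2) from rfl,
      vStep_add_two, vStep_add_two]
    exact ⟨ih.1, by simp [ih.2]⟩

end VStep

section Monomials

variable {R : Type*} [Semiring R]

def uvMonomial (u v : R) (m : ℕ × ℕ × Fin 2) : R :=
  u ^ m.1 * (v * u) ^ m.2.1 * v ^ (m.2.2 : ℕ)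

lemma map_uvMonomial {S F : Type*} [Semiring S] [FunLike F R S] [RingHomClass F R S] (f : F)
    (u v : R) (m : ℕ × ℕ × Fin 2) : f (uvMonomial u v m) = uvMonomial (f u) (f v) m := by
  simp only [uvMonomial, map_mul, map_pow]

lemma mul_uvMonomial (u v : R) (m : ℕ × ℕ × Fin 2) :
    u * uvMonomial u v m = uvMonomial u v (m.1 + 1, m.2) := by
  simp only [uvMonomial, pow_succ', mul_assoc]

lemma mul_self_mul_uvMonomial (u v : R) (m : ℕ × ℕ × Fin 2) :
    u * u * uvMonomial u v m = uvMonomial u v (m.1 + 2, m.2) := by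
  rw [mul_assoc, mul_uvMonomial, mul_uvMonomial]

variable {K : Type*} [Field K] [Algebra K R] {u v : R} {c : K}

lemma v_mul_uvMonomial (h : u * u = c • (v * v)) (hc : c ≠ 0) (m : ℕ × ℕ × Fin 2) :
    v * uvMonomial u v m = (vStep c m).1 • uvMonomial u v (vStep c m).2 := by
  have hvv : v * v = c⁻¹ • (u * u) := by rw [h, inv_smul_smul₀ hc]
  have hcomm : Commute (u * u) v := by
    rw [h]; exact ((Commute.refl v).mul_left (Commute.refl v)).smul_left c
  obtain ⟨i, j, l⟩ := m
  induction i using Nat.twoStepInduction with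
  | zero =>
    rcases j with _ | j
    · fin_cases l
      · simp [uvMonomial, vStep]
      · simp [uvMonomial, vStep, hvv, sq]
    · simp [uvMonomial, vStep, pow_succ', ← mul_assoc, hvv]
  | one => simp [uvMonomial, vStep, pow_succ', mul_assoc]
  | more i ih _ =>
    rw [show ((i + 2, j, l) : ℕ × ℕ × Fin 2) = ((i, j, l).1 + 2, (i, j, l).2) from rfl,
      vStep_add_two]
    calc v * uvMonomial u v (i + 2, j, l)
        = v * (u * u * uvMonomial u v (i, j, l)) := by rw [mul_self_mul_uvMonomial]
      _ = u * u * (v * uvMonomial u v (i, j, l)) := by rw [← mul_assoc, ← hcomm.eq, mul_assoc]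
      _ = _ := by rw [ih, mul_smul_comm, mul_self_mul_uvMonomial]

end Monomials

lemma Submodule.eq_top_of_one_mem_of_mul_mem {K R : Type*} [CommSemiring K] [Semiring R]
    [Algebra K R] {s : Set R} (hs : Algebra.adjoin K s = ⊤) {S : Submodule K R}
    (h1 : (1 : R) ∈ S) (hmul : ∀ a ∈ s, ∀ x ∈ S, a * x ∈ S) : S = ⊤ := by
  have hmul_adjoin : ∀ a ∈ Algebra.adjoin K s, ∀ x ∈ S, a * x ∈ S := by
    intro a ha
    induction ha using Algebra.adjoin_induction with
    | mem a ha => exact hmul a ha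
    | algebraMap r => intro x hx; rw [← Algebra.smul_def]; exact S.smul_mem r hx
    | add a b _ _ iha ihb => intro x hx; rw [add_mul]; exact S.add_mem (iha x hx) (ihb x hx)
    | mul a b _ _ iha ihb => intro x hx; rw [mul_assoc]; exact iha _ (ihb x hx)
  refine eq_top_iff.mpr fun a _ => ?_
  simpa using hmul_adjoin a (hs ▸ Algebra.mem_top) 1 h1

lemma span_uvMonomial_eq_top {K R : Type*} [Field K] [Semiring R] [Algebra K R] {u v : R} {c : K}
    (h : u * u = c • (v * v)) (hc : c ≠ 0) (hgen : Algebra.adjoin K {u, v} = ⊤) :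
    Submodule.span K (Set.range (uvMonomial u v)) = ⊤ := by
  set S := Submodule.span K (Set.range (uvMonomial u v))
  have mul_mem (a : R) (ha : ∀ m, a * uvMonomial u v m ∈ S) : ∀ x ∈ S, a * x ∈ S :=
    fun x hx => (Submodule.span_le (p := S.comap (LinearMap.mulLeft K a))).mpr
      (Set.range_subset_iff.mpr ha) hx
  refine Submodule.eq_top_of_one_mem_of_mul_mem hgen
    (Submodule.subset_span ⟨(0, 0, 0), by simp [uvMonomial]⟩) ?_
  simp only [Set.mem_insert_iff, Set.mem_singleton_iff, forall_eq_or_imp, forall_eq]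
  refine ⟨mul_mem u fun m => ?_, mul_mem v fun m => ?_⟩
  · exact Submodule.subset_span ⟨_, (mul_uvMonomial u v m).symm⟩
  · rw [v_mul_uvMonomial h hc m]
    exact S.smul_mem _ (Submodule.subset_span ⟨_, rfl⟩)

section Model

open Finsupp

def weightedShift {K ι : Type*} [Semiring K] (f : ι → K × ι) : Module.End K (ι →₀ K) :=
  linearCombination K fun i => single (f i).2 (f i).1

lemma weightedShift_single {K ι : Type*} [Semiring K] (f : ι → K × ι) (i : ι) (a : K) :
    weightedShift f (single i a) = single (f i).2 (a * (f i).1) := by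
  simp [weightedShift]

variable {K : Type*} [Field K]

def shiftU : Module.End K ((ℕ × ℕ × Fin 2) →₀ K) := weightedShift fun m => (1, (m.1 + 1, m.2))

def shiftV (c : K) : Module.End K ((ℕ × ℕ × Fin 2) →₀ K) := weightedShift (vStep c)

@[simp] lemma shiftU_single (m : ℕ × ℕ × Fin 2) (a : K) :
    shiftU (single m a) = single (m.1 + 1, m.2) a := by
  simp [shiftU, weightedShift_single]

@[simp] lemma shiftV_single (c : K) (m : ℕ × ℕ × Fin 2) (a : K) :
    shiftV c (single m a) = single (vStep c m).2 (a * (vStep c m).1) :=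
  weightedShift_single _ _ _

lemma shiftU_mul_shiftU {c : K} (hc : c ≠ 0) : shiftU * shiftU = c • (shiftV c * shiftV c) := by
  refine lhom_ext fun m a => ?_
  obtain ⟨hcoeff, hidx⟩ := vStep_vStep c m
  rw [Module.End.mul_apply, LinearMap.smul_apply, Module.End.mul_apply, shiftU_single,
    shiftU_single, shiftV_single, shiftV_single, hidx, smul_single, mul_assoc, hcoeff,
    smul_eq_mul, mul_left_comm, mul_inv_cancel₀ hc, mul_one]

lemma shiftU_pow_single (i : ℕ) (m : ℕ × ℕ × Fin 2) (a : K) :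
    (shiftU ^ i) (single m a) = single (m.1 + i, m.2) a := by
  induction i with
  | zero => simp
  | succ i ih => simp [pow_succ', Module.End.mul_apply, ih, add_assoc]

lemma shiftV_mul_shiftU_pow_single (c : K) (j j₀ : ℕ) (l : Fin 2) (a : K) :
    ((shiftV c * shiftU : Module.End K _) ^ j) (single (0, j₀, l) a) =
      single (0, j₀ + j, l) a := by
  induction j with
  | zero => simp
  | succ j ih => simp [pow_succ', Module.End.mul_apply, ih, vStep, add_assoc]

lemma uvMonomial_shift_single_zero (c : K) (m : ℕ × ℕ × Fin 2) :
    uvMonomial shiftU (shiftV c) m (single (0, 0, 0) 1) = single m 1 := by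
  obtain ⟨i, j, l⟩ := m
  have hv : (shiftV c ^ (l : ℕ)) (single (0, 0, 0) 1) = single (0, 0, l) 1 := by
    fin_cases l <;> simp [vStep]
  simp [uvMonomial, Module.End.mul_apply, hv, shiftV_mul_shiftU_pow_single, shiftU_pow_single]

lemma linearIndependent_uvMonomial {R : Type*} [Semiring R] [Algebra K R] {u v : R} (c : K)
    (ρ : R →ₐ[K] Module.End K ((ℕ × ℕ × Fin 2) →₀ K)) (hu : ρ u = shiftU) (hv : ρ v = shiftV c) :
    LinearIndependent K (uvMonomial u v) := by
  refine LinearIndependent.of_comp ((LinearMap.applyₗ (single (0, 0, 0) 1)).comp ρ.toLinearMap) ?_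
  convert linearIndependent_single_one K (ℕ × ℕ × Fin 2) with m
  simp [map_uvMonomial, hu, hv, uvMonomial_shift_single_zero]

end Model

namespace Stmt2

lemma u_mul_u (c : ℂ) : u c * u c = c • (v c * v c) := by
  simpa only [map_mul, map_smul, u, v] using RingQuot.mkAlgHom_rel ℂ (Rel.main (c := c))

lemma adjoin_u_v (c : ℂ) : Algebra.adjoin ℂ {u c, v c} = ⊤ := by
  have himage : RingQuot.mkAlgHom ℂ (Rel c) '' Set.range (ι ℂ) = {u c, v c} := by
    rw [← Set.range_comp, Set.range_eq_iff]
    simp [Fin.forall_fin_two, u, v]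
  rw [← himage, ← AlgHom.map_adjoin, FreeAlgebra.adjoin_range_ι, Algebra.map_top,
    AlgHom.range_eq_top]
  exact RingQuot.mkAlgHom_surjective ℂ (Rel c)

def shiftRep (c : ℂ) (hc : c ≠ 0) : A c →ₐ[ℂ] Module.End ℂ ((ℕ × ℕ × Fin 2) →₀ ℂ) :=
  RingQuot.liftAlgHom ℂ ⟨FreeAlgebra.lift ℂ ![shiftU, shiftV c], by
    rintro _ _ ⟨⟩
    simpa using shiftU_mul_shiftU hc⟩

lemma shiftRep_u (c : ℂ) (hc : c ≠ 0) : shiftRep c hc (u c) = shiftU := by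
  simp [shiftRep, u]

lemma shiftRep_v (c : ℂ) (hc : c ≠ 0) : shiftRep c hc (v c) = shiftV c := by
  simp [shiftRep, v]

end Stmt2

open Stmt2 in
/-- The monomials `u^i (vu)^j v^ℓ`, `i j ∈ ℕ`, `ℓ ∈ {0,1}`, form a ℂ-basis of
`A = ℂ⟨u,v⟩/(u² - c v²)`. -/
theorem stmt_2 (c : ℂ) (hc : c ≠ 0) :
    LinearIndependent ℂ (fun m : ℕ × ℕ × Fin 2 =>
        u c ^ m.1 * (v c * u c) ^ m.2.1 * v c ^ (m.2.2 : ℕ)) ∧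
    Submodule.span ℂ (Set.range (fun m : ℕ × ℕ × Fin 2 =>
        u c ^ m.1 * (v c * u c) ^ m.2.1 * v c ^ (m.2.2 : ℕ))) = ⊤ :=
  ⟨linearIndependent_uvMonomial c (shiftRep c hc) (shiftRep_u c hc) (shiftRep_v c hc),
    span_uvMonomial_eq_top (u_mul_u c) hc (adjoin_u_v c)⟩

end
end

section
/- Let R be a ℂ-algebra, let α ∈ ℂ be nonzero, let k ≥ 1, and let x, y, z, w ∈ R satisfy x*y = y*x, x*z = z*x, x*w = w*x, y*z = z*y, y*w = w*y, and x*y = α·z^{2k}. Then for all nonnegative integers t, l, s, the element z^t * (x^l + (−1)^{t+s+l} * y^l) * w^s belongs to the ℂ-subalgebra of R generated by the six elements z², x − y, (x+y)*w, w², z*(x+y), and z*w. -/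
/-- Lemma 1.5 of Ferraro–Kirkman–Moore–Won. -/
theorem stmt_6 {R : Type*} [Ring R] [Algebra ℂ R] (α : ℂ) (hα : α ≠ 0)
    (k : ℕ) (hk : 1 ≤ k) (x y z w : R)
    (hxy : x * y = y * x) (hxz : x * z = z * x) (hxw : x * w = w * x)
    (hyz : y * z = z * y) (hyw : y * w = w * y)
    (hrel : x * y = α • z ^ (2 * k)) :
    ∀ t l s : ℕ,
      z ^ t * (x ^ l + (-1 : R) ^ (t + s + l) * y ^ l) * w ^ s ∈
        Algebra.adjoin ℂ
          ({z ^ 2, x - y, (x + y) * w, w ^ 2, z * (x + y), z * w} : Set R) := by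
  have cxz : Commute x z := hxz
  have cyz : Commute y z := hyz
  set A := Algebra.adjoin ℂ
      ({z ^ 2, x - y, (x + y) * w, w ^ 2, z * (x + y), z * w} : Set R) with hA
  have hz2 : z ^ 2 ∈ A := Algebra.subset_adjoin (by simp)
  have hxmy : x - y ∈ A := Algebra.subset_adjoin (by simp)
  have hxyw : (x + y) * w ∈ A := Algebra.subset_adjoin (by simp)
  have hw2 : w ^ 2 ∈ A := Algebra.subset_adjoin (by simp)
  have hzxy : z * (x + y) ∈ A := Algebra.subset_adjoin (by simp)
  have hzw : z * w ∈ A := Algebra.subset_adjoin (by simp)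
  -- z^t * w^s lies in A when t+s is even
  have hpow : ∀ t s : ℕ, Even (t + s) → z ^ t * w ^ s ∈ A := by
    intro t s hts
    rcases Nat.even_or_odd t with ht | ht
    · have hs : Even s := by
        rw [Nat.even_iff] at hts ht ⊢; omega
      obtain ⟨a, ha⟩ := ht
      obtain ⟨b, hb⟩ := hs
      have : z ^ t * w ^ s = (z ^ 2) ^ a * (w ^ 2) ^ b := by
        subst ha hb; rw [← two_mul, ← two_mul, pow_mul, pow_mul]
      rw [this]
      exact mul_mem (pow_mem hz2 a) (pow_mem hw2 b)
    · have hs : Odd s := by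
        rw [Nat.even_iff] at hts; rw [Nat.odd_iff] at ht ⊢; omega
      obtain ⟨a, ha⟩ := ht
      obtain ⟨b, hb⟩ := hs
      have : z ^ t * w ^ s = (z ^ 2) ^ a * ((z * w) * (w ^ 2) ^ b) := by
        subst ha hb
        rw [pow_succ, pow_succ', pow_mul, pow_mul, mul_assoc, mul_assoc]
      rw [this]
      exact mul_mem (pow_mem hz2 a) (mul_mem hzw (pow_mem hw2 b))
  -- z^t * (x+y) * w^s lies in A when t+s is odd
  have hsum : ∀ t s : ℕ, Odd (t + s) → z ^ t * (x + y) * w ^ s ∈ A := by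
    intro t s hts
    rcases Nat.even_or_odd t with ht | ht
    · have hs : Odd s := by
        rw [Nat.odd_iff] at hts ⊢; rw [Nat.even_iff] at ht; omega
      obtain ⟨a, ha⟩ := ht
      obtain ⟨b, hb⟩ := hs
      have : z ^ t * (x + y) * w ^ s = (z ^ 2) ^ a * (((x + y) * w) * (w ^ 2) ^ b) := by
        subst ha hb
        rw [← two_mul, pow_succ', pow_mul, pow_mul, mul_assoc, mul_assoc, ← mul_assoc (x + y)]
      rw [this]
      exact mul_mem (pow_mem hz2 a) (mul_mem hxyw (pow_mem hw2 b))
    · have hs : Even s := by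
        rw [Nat.odd_iff] at hts ht; rw [Nat.even_iff]; omega
      obtain ⟨a, ha⟩ := ht
      obtain ⟨b, hb⟩ := hs
      have : z ^ t * (x + y) * w ^ s = (z ^ 2) ^ a * ((z * (x + y)) * (w ^ 2) ^ b) := by
        subst ha hb
        rw [← two_mul, pow_succ, pow_mul, pow_mul, mul_assoc, mul_assoc, mul_assoc]
      rw [this]
      exact mul_mem (pow_mem hz2 a) (mul_mem hzxy (pow_mem hw2 b))
  intro t l s
  induction l using Nat.twoStepInduction generalizing t s with
  | zero =>
    simp only [pow_zero, mul_one, Nat.add_zero]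
    rcases Nat.even_or_odd (t + s) with h | h
    · rw [h.neg_one_pow]
      have : z ^ t * (1 + 1) * w ^ s = z ^ t * w ^ s + z ^ t * w ^ s := by noncomm_ring
      rw [this]
      exact add_mem (hpow t s h) (hpow t s h)
    · rw [h.neg_one_pow]
      simp only [add_neg_cancel, mul_zero, zero_mul]
      exact zero_mem A
  | one =>
    simp only [pow_one]
    rcases Nat.even_or_odd (t + s) with h | h
    · obtain ⟨m, hm⟩ := id h
      have : (-1 : R) ^ (t + s + 1) = -1 := Odd.neg_one_pow ⟨m, by omega⟩
      rw [this]
      have e : z ^ t * (x + -1 * y) * w ^ s = (x - y) * (z ^ t * w ^ s) := by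
        have hc : (x - y) * z ^ t = z ^ t * (x - y) := ((cxz.sub_left cyz).pow_right t).eq
        rw [neg_one_mul, ← sub_eq_add_neg, ← hc, mul_assoc]
      rw [e]
      exact mul_mem hxmy (hpow t s h)
    · obtain ⟨m, hm⟩ := id h
      have : (-1 : R) ^ (t + s + 1) = 1 := Even.neg_one_pow ⟨m + 1, by omega⟩
      rw [this, one_mul]
      exact hsum t s h
  | more n ih ih1 =>
    have key1 : ∀ a b : R,
        (x - y) * (x * a - y * b) + (x * y) * (a + b) = x * (x * a) + y * (y * b) := by
      intro a b
      have h1 : y * (x * a) = x * y * a := by rw [← mul_assoc, ← hxy]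
      have h2 : x * (y * b) = x * y * b := by rw [← mul_assoc]
      simp only [mul_sub, sub_mul, mul_add]
      rw [h1, h2]
      abel
    have key2 : ∀ a b : R,
        (x - y) * (x * a + y * b) + (x * y) * (a - b) = x * (x * a) - y * (y * b) := by
      intro a b
      have h1 : y * (x * a) = x * y * a := by rw [← mul_assoc, ← hxy]
      have h2 : x * (y * b) = x * y * b := by rw [← mul_assoc]
      simp only [mul_sub, sub_mul, mul_add, add_mul]
      rw [h1, h2]
      abel
    have inner : x ^ (n + 2) + (-1 : R) ^ (t + s + (n + 2)) * y ^ (n + 2)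
        = (x - y) * (x ^ (n + 1) + (-1 : R) ^ (t + s + (n + 1)) * y ^ (n + 1))
          + (x * y) * (x ^ n + (-1 : R) ^ (t + 2 * k + s + n) * y ^ n) := by
      rcases Nat.even_or_odd (t + s + n) with ⟨m, hm⟩ | ⟨m, hm⟩
      · rw [show ((-1 : R) ^ (t + s + (n + 2)) = 1) from Even.neg_one_pow ⟨m + 1, by omega⟩,
            show ((-1 : R) ^ (t + s + (n + 1)) = -1) from Odd.neg_one_pow ⟨m, by omega⟩,
            show ((-1 : R) ^ (t + 2 * k + s + n) = 1) from Even.neg_one_pow ⟨m + k, by omega⟩]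
        rw [one_mul, one_mul, neg_one_mul, ← sub_eq_add_neg]
        rw [show x ^ (n + 2) = x * (x * x ^ n) by rw [pow_succ', pow_succ'],
            show y ^ (n + 2) = y * (y * y ^ n) by rw [pow_succ', pow_succ'],
            pow_succ' x n, pow_succ' y n]
        exact (key1 (x ^ n) (y ^ n)).symm
      · rw [show ((-1 : R) ^ (t + s + (n + 2)) = -1) from Odd.neg_one_pow ⟨m + 1, by omega⟩,
            show ((-1 : R) ^ (t + s + (n + 1)) = 1) from Even.neg_one_pow ⟨m + 1, by omega⟩,
            show ((-1 : R) ^ (t + 2 * k + s + n) = -1) from Odd.neg_one_pow ⟨m + k, by omega⟩]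
        rw [one_mul, neg_one_mul, neg_one_mul, ← sub_eq_add_neg, ← sub_eq_add_neg]
        rw [show x ^ (n + 2) = x * (x * x ^ n) by rw [pow_succ', pow_succ'],
            show y ^ (n + 2) = y * (y * y ^ n) by rw [pow_succ', pow_succ'],
            pow_succ' x n, pow_succ' y n]
        exact (key2 (x ^ n) (y ^ n)).symm
    have hzt : (x - y) * z ^ t = z ^ t * (x - y) := ((cxz.sub_left cyz).pow_right t).eq
    have h1 : (x - y) * (z ^ t * (x ^ (n + 1) + (-1 : R) ^ (t + s + (n + 1)) * y ^ (n + 1)) * w ^ s)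
        = z ^ t * ((x - y) * (x ^ (n + 1) + (-1 : R) ^ (t + s + (n + 1)) * y ^ (n + 1))) * w ^ s := by
      rw [← mul_assoc, ← mul_assoc, hzt, mul_assoc (z ^ t)]
    have h2 : α • (z ^ (t + 2 * k) * (x ^ n + (-1 : R) ^ (t + 2 * k + s + n) * y ^ n) * w ^ s)
        = z ^ t * ((x * y) * (x ^ n + (-1 : R) ^ (t + 2 * k + s + n) * y ^ n)) * w ^ s := by
      rw [hrel, pow_add]
      simp only [smul_mul_assoc, mul_smul_comm, mul_assoc]
    have main : z ^ t * (x ^ (n + 2) + (-1 : R) ^ (t + s + (n + 2)) * y ^ (n + 2)) * w ^ s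
        = (x - y) * (z ^ t * (x ^ (n + 1) + (-1 : R) ^ (t + s + (n + 1)) * y ^ (n + 1)) * w ^ s)
          + α • (z ^ (t + 2 * k) * (x ^ n + (-1 : R) ^ (t + 2 * k + s + n) * y ^ n) * w ^ s) := by
      rw [inner, h1, h2, ← add_mul, ← mul_add]
    rw [main]
    exact add_mem (mul_mem hxmy (ih1 t s)) (A.smul_mem (ih (t + 2 * k) s) α)
end

section
/- Let R be a ℂ-algebra, let α ∈ ℂ be nonzero, let k ≥ 1, and let x, y, z, w ∈ R satisfy x*y = y*x, x*z = z*x, x*w = w*x, y*z = z*y, y*w = w*y, and x*y = α·z^{2k}. Then for all nonnegative integers t, l and every EVEN nonnegative integer s, the element z^t * (x^l + (−1)^{t+l} * y^l) * w^s belongs to the ℂ-subalgebra of R generated by the four elements z², x − y, w², and z*(x+y). -/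
/-!
Write `P l = x ^ l + ε * y ^ l`. Because `x` and `y` commute,
`P (l + 2) = P' (l + 1) * (x - y) + P l * (x * y)`, where `P'` carries the opposite sign `-ε`.
Multiplying on the right keeps `z ^ t * P l` in the subalgebra, since `x * y = α • (z ^ 2) ^ k`
lies in it, so `z` never has to commute with anything. The sign `(-1) ^ (t + l)` is what puts the
base cases there: `l = 0` gives `0` or `2 z ^ t` with `t` even, and `l = 1` gives
`z ^ t * (x - y)` with `t` even or `z ^ (t - 1) * (z * (x + y))` with `t` odd.
-/

theorem Commute.pow_add_two_add_mul_pow {R : Type*} [Ring R] {x y : R} (h : Commute x y)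
    (c : R) (n : ℕ) :
    x ^ (n + 2) + c * y ^ (n + 2) =
      (x ^ (n + 1) - c * y ^ (n + 1)) * (x - y) + (x ^ n + c * y ^ n) * (x * y) := by
  have hyx : y ^ (n + 1) * x = y ^ n * (x * y) := by
    rw [pow_succ, mul_assoc, h.eq]
  simp only [sub_mul, mul_sub, add_mul, mul_assoc, ← pow_succ, ← hyx]
  rw [← mul_assoc (x ^ n), ← pow_succ]
  abel

section

variable {R S : Type*} [Ring R] [SetLike S R] [SubringClass S R] {A : S}

theorem pow_mul_pow_add_neg_one_pow_mul_pow_mem {x y z : R} (hxy : Commute x y)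
    (hz : z ^ 2 ∈ A) (hsub : x - y ∈ A) (hadd : z * (x + y) ∈ A) (hmul : x * y ∈ A)
    (t l : ℕ) : z ^ t * (x ^ l + (-1 : R) ^ (t + l) * y ^ l) ∈ A := by
  have hzeven (m : ℕ) : z ^ (2 * m) ∈ A := by rw [pow_mul]; exact pow_mem hz m
  induction l using Nat.twoStepInduction with
  | zero =>
    obtain ⟨m, rfl | rfl⟩ := Nat.even_or_odd' t
    · rw [add_zero, (even_two_mul m).neg_one_pow, pow_zero, pow_zero, one_mul]
      exact mul_mem (hzeven m) (add_mem (one_mem A) (one_mem A))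
    · simp [(odd_two_mul_add_one m).neg_one_pow, zero_mem]
  | one =>
    obtain ⟨m, rfl | rfl⟩ := Nat.even_or_odd' t
    · rw [(odd_two_mul_add_one m).neg_one_pow, pow_one, pow_one, neg_one_mul, ← sub_eq_add_neg]
      exact mul_mem (hzeven m) hsub
    · rw [show 2 * m + 1 + 1 = 2 * (m + 1) by ring, (even_two_mul _).neg_one_pow, pow_one,
        pow_one, one_mul, pow_succ, mul_assoc]
      exact mul_mem (hzeven m) hadd
  | more n ih₀ ih₁ =>
    have hsign₁ : (-1 : R) ^ (t + (n + 1)) = -(-1) ^ (t + n) := by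
      rw [← add_assoc, pow_succ, mul_neg_one]
    have hsign₂ : (-1 : R) ^ (t + (n + 2)) = (-1) ^ (t + n) := by
      rw [← add_assoc, pow_add, neg_one_sq, mul_one]
    rw [hsign₁, neg_mul, ← sub_eq_add_neg] at ih₁
    rw [hsign₂, hxy.pow_add_two_add_mul_pow, mul_add, ← mul_assoc, ← mul_assoc]
    exact add_mem (mul_mem ih₁ hsub) (mul_mem ih₀ hmul)

end

theorem stmt_7_general {R : Type*} [Ring R] [Algebra ℂ R] (α : ℂ)
    (k : ℕ) (x y z w : R)
    (hxy : x * y = y * x)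
    (hrel : x * y = α • z ^ (2 * k)) :
    ∀ t l s : ℕ, Even s →
      z ^ t * (x ^ l + (-1 : R) ^ (t + l) * y ^ l) * w ^ s ∈
        Algebra.adjoin ℂ ({z ^ 2, x - y, w ^ 2, z * (x + y)} : Set R) := by
  set A := Algebra.adjoin ℂ ({z ^ 2, x - y, w ^ 2, z * (x + y)} : Set R)
  intro t l s ⟨m, hm⟩
  have hz : z ^ 2 ∈ A := Algebra.subset_adjoin (by simp)
  have hw : w ^ s ∈ A := by
    rw [hm, ← two_mul, pow_mul]
    exact pow_mem (Algebra.subset_adjoin (by simp)) m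
  have hmul : x * y ∈ A := by
    rw [hrel, pow_mul]
    exact Subalgebra.smul_mem A (pow_mem hz k) α
  exact mul_mem (pow_mul_pow_add_neg_one_pow_mul_pow_mem hxy hz
    (Algebra.subset_adjoin (by simp)) (Algebra.subset_adjoin (by simp)) hmul t l) hw

/-- Remark 1.6 of Ferraro–Kirkman–Moore–Won. -/
theorem stmt_7 {R : Type*} [Ring R] [Algebra ℂ R] (α : ℂ) (hα : α ≠ 0)
    (k : ℕ) (hk : 1 ≤ k) (x y z w : R)
    (hxy : x * y = y * x) (hxz : x * z = z * x) (hxw : x * w = w * x)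
    (hyz : y * z = z * y) (hyw : y * w = w * y)
    (hrel : x * y = α • z ^ (2 * k)) :
    ∀ t l s : ℕ, Even s →
      z ^ t * (x ^ l + (-1 : R) ^ (t + l) * y ^ l) * w ^ s ∈
        Algebra.adjoin ℂ ({z ^ 2, x - y, w ^ 2, z * (x + y)} : Set R) :=
  stmt_7_general α k x y z w hxy hrel
end

section
/- Let R be a ℂ-algebra, let α ∈ ℂ be nonzero, let k ≥ 1, and let x, y, z, w ∈ R satisfy x*y = y*x, x*z = z*x, x*w = w*x, y*z = z*y, y*w = w*y, and x*y = α·z^{2k}. Then for all nonnegative integers l and s, the element (x^l + (−1)^{l+s} * y^l) * w^s belongs to the ℂ-subalgebra of R generated by the four elements z, x − y, (x+y)*w, and w². -/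
private lemma aux_sum {T : Type*} [Ring T] {a b : T} (h : Commute a b) (l : ℕ) :
    a ^ (l + 2) + b ^ (l + 2)
      = (a ^ (l + 1) + b ^ (l + 1)) * (a + b) - a * b * (a ^ l + b ^ l) := by
  have e1 : a * b * a ^ l = a ^ (l + 1) * b := by
    rw [mul_assoc, (h.symm.pow_right l).eq, ← mul_assoc, ← pow_succ']
  have e2 : b ^ (l + 1) * a = a * b ^ (l + 1) := (h.symm.pow_left (l + 1)).eq
  have e3 : a * (b * b ^ l) = a * (b ^ l * b) := by rw [← pow_succ', ← pow_succ]
  linear_combination (norm := noncomm_ring) e1 - e2 + e3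

private lemma aux_diff {T : Type*} [Ring T] {a b : T} (h : Commute a b) (l : ℕ) :
    a ^ (l + 2) - b ^ (l + 2)
      = (a ^ (l + 1) - b ^ (l + 1)) * (a + b) - a * b * (a ^ l - b ^ l) := by
  have e1 : a * b * a ^ l = a ^ (l + 1) * b := by
    rw [mul_assoc, (h.symm.pow_right l).eq, ← mul_assoc, ← pow_succ']
  have e2 : b ^ (l + 1) * a = a * b ^ (l + 1) := (h.symm.pow_left (l + 1)).eq
  have e3 : a * (b * b ^ l) = a * (b ^ l * b) := by rw [← pow_succ', ← pow_succ]
  linear_combination (norm := noncomm_ring) e1 + e2 - e3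

/-- Remark 1.7 of Ferraro–Kirkman–Moore–Won. -/
theorem stmt_8 {R : Type*} [Ring R] [Algebra ℂ R] (α : ℂ) (hα : α ≠ 0)
    (k : ℕ) (hk : 1 ≤ k) (x y z w : R)
    (hxy : x * y = y * x) (hxz : x * z = z * x) (hxw : x * w = w * x)
    (hyz : y * z = z * y) (hyw : y * w = w * y)
    (hrel : x * y = α • z ^ (2 * k)) :
    ∀ l s : ℕ,
      (x ^ l + (-1 : R) ^ (l + s) * y ^ l) * w ^ s ∈
        Algebra.adjoin ℂ ({z, x - y, (x + y) * w, w ^ 2} : Set R) := by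
  set A := Algebra.adjoin ℂ ({z, x - y, (x + y) * w, w ^ 2} : Set R) with hAdef
  have hzA : z ∈ A := Algebra.subset_adjoin (by simp)
  have hxyA : x * y ∈ A := by
    rw [hrel]; exact A.smul_mem (A.pow_mem hzA _) _
  have hsubA : x - y ∈ A := Algebra.subset_adjoin (by simp)
  have hxywA : (x + y) * w ∈ A := Algebra.subset_adjoin (by simp)
  have hw2A : w ^ 2 ∈ A := Algebra.subset_adjoin (by simp)
  have hxnyA : x * -y ∈ A := by
    rw [mul_neg]; exact A.neg_mem hxyA
  have hcxy : Commute x y := hxy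
  have hc : Commute x (-y) := hcxy.neg_right
  have hw' : (x - y) * w = w * (x - y) := by
    rw [sub_mul, hxw, hyw, mul_sub]
  -- u_l = x^l + (-y)^l
  have hu : ∀ l : ℕ, x ^ l + (-y) ^ l ∈ A := by
    intro l
    induction l using Nat.twoStepInduction with
    | zero => simpa using A.add_mem A.one_mem A.one_mem
    | one => simpa [sub_eq_add_neg] using hsubA
    | more l ih1 ih2 =>
      rw [aux_sum hc l, show x + -y = x - y from (sub_eq_add_neg x y).symm]
      exact A.sub_mem (A.mul_mem ih2 hsubA) (A.mul_mem hxnyA ih1)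
  -- v_l = (x^l - (-y)^l) * w
  have hv : ∀ l : ℕ, (x ^ l - (-y) ^ l) * w ∈ A := by
    intro l
    induction l using Nat.twoStepInduction with
    | zero => simpa using A.zero_mem
    | one => simpa [sub_neg_eq_add] using hxywA
    | more l ih1 ih2 =>
      have key : (x ^ (l + 2) - (-y) ^ (l + 2)) * w
          = ((x ^ (l + 1) - (-y) ^ (l + 1)) * w) * (x - y)
            - (x * -y) * ((x ^ l - (-y) ^ l) * w) := by
        rw [aux_diff hc l, show x + -y = x - y from (sub_eq_add_neg x y).symm,
          sub_mul, mul_assoc, mul_assoc, hw', ← mul_assoc, ← mul_assoc]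
      rw [key]
      exact A.sub_mem (A.mul_mem ih2 hsubA) (A.mul_mem hxnyA ih1)
  intro l s
  rcases Nat.even_or_odd s with ⟨t, rfl⟩ | ⟨t, rfl⟩
  · have hsign : (-1 : R) ^ (l + (t + t)) * y ^ l = (-y) ^ l := by
      rw [neg_pow y, pow_add, ← two_mul, pow_mul, neg_one_sq, one_pow, mul_one]
    have hws : w ^ (t + t) = (w ^ 2) ^ t := by
      rw [← pow_mul, two_mul]
    rw [hsign, hws]
    exact A.mul_mem (hu l) (A.pow_mem hw2A t)
  · have hsign : (-1 : R) ^ (l + (2 * t + 1)) * y ^ l = -((-y) ^ l) := by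
      rw [neg_pow y, pow_add, pow_succ, pow_mul, neg_one_sq, one_pow, one_mul,
        mul_neg_one, neg_mul]
    have hws : w ^ (2 * t + 1) = w * (w ^ 2) ^ t := by
      rw [pow_succ', pow_mul]
    rw [hsign, hws]
    have key : (x ^ l + -(-y) ^ l) * (w * (w ^ 2) ^ t)
        = ((x ^ l - (-y) ^ l) * w) * (w ^ 2) ^ t := by
      rw [← sub_eq_add_neg, mul_assoc]
    rw [key]
    exact A.mul_mem (hv l) (A.pow_mem hw2A t)
end

section
/- Let R be a ℂ-algebra, let α ∈ ℂ be nonzero, let k ≥ 1, and let x, y, z, w ∈ R satisfy x*y = y*x, x*z = z*x, x*w = w*x, y*z = z*y, y*w = w*y, and x*y = α·z^{2k}. Then for all nonnegative integers t and l, the element z^t * (x^l + (−1)^{t+l} * y^l) belongs to the ℂ-subalgebra of R generated by the three elements z², x − y, and z*(x+y). -/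
/-!
Put `u = x` and `v = -y`, so that `x ^ l + (-1) ^ l * y ^ l = u ^ l + v ^ l`. The power sums
`u ^ l + v ^ l` and the twisted differences `z * (u ^ l - v ^ l)` satisfy two-step recurrences
whose coefficients are `u + v = x - y`, `z * (u - v) = z * (x + y)` and `u * v = -(x * y)`, and the
last one lies in the subalgebra because `x * y = α • (z ^ 2) ^ k`. Multiplying by a power of `z ^ 2`
then accounts for the parity of `t`.
-/

namespace Commute

variable {R : Type*} [Ring R] {u v : R}

theorem pow_add_pow_add_two (h : Commute u v) (n : ℕ) :
    u ^ (n + 2) + v ^ (n + 2) = (u + v) * (u ^ (n + 1) + v ^ (n + 1)) - u * v * (u ^ n + v ^ n) := by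
  have hvu : v * u ^ (n + 1) = u * v * u ^ n := by rw [pow_succ', ← mul_assoc, h.eq]
  have huv : u * v ^ (n + 1) = u * v * v ^ n := by rw [pow_succ', mul_assoc]
  rw [pow_succ' u, pow_succ' v, mul_add, add_mul, add_mul, hvu, huv, mul_add]
  abel

theorem pow_sub_pow_add_two (h : Commute u v) (n : ℕ) :
    u ^ (n + 2) - v ^ (n + 2) = (u - v) * (u ^ (n + 1) + v ^ (n + 1)) + u * v * (u ^ n - v ^ n) := by
  have hvu : v * u ^ (n + 1) = u * v * u ^ n := by rw [pow_succ', ← mul_assoc, h.eq]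
  have huv : u * v ^ (n + 1) = u * v * v ^ n := by rw [pow_succ', mul_assoc]
  rw [pow_succ' u, pow_succ' v, mul_add, sub_mul, sub_mul, hvu, huv, mul_sub]
  abel

end Commute

section PowerSums

variable {R S : Type*} [Ring R] [SetLike S R] [SubringClass S R] {A : S} {u v : R}

theorem pow_add_pow_mem (h : Commute u v) (hsum : u + v ∈ A) (hprod : u * v ∈ A) :
    ∀ n : ℕ, u ^ n + v ^ n ∈ A
  | 0 => by simpa only [pow_zero] using add_mem (one_mem A) (one_mem A)
  | 1 => by simpa only [pow_one] using hsum
  | n + 2 => by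
    rw [h.pow_add_pow_add_two]
    exact sub_mem (mul_mem hsum (pow_add_pow_mem h hsum hprod (n + 1)))
      (mul_mem hprod (pow_add_pow_mem h hsum hprod n))

theorem mul_pow_sub_pow_mem {c : R} (h : Commute u v) (hc : Commute c (u * v)) (hsum : u + v ∈ A)
    (hprod : u * v ∈ A) (hdiff : c * (u - v) ∈ A) : ∀ n : ℕ, c * (u ^ n - v ^ n) ∈ A
  | 0 => by simpa only [pow_zero, sub_self, mul_zero] using zero_mem A
  | 1 => by simpa only [pow_one] using hdiff
  | n + 2 => by
    rw [h.pow_sub_pow_add_two, mul_add, ← mul_assoc c, ← mul_assoc c (u * v), hc.eq,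
      mul_assoc (u * v)]
    exact add_mem (mul_mem hdiff (pow_add_pow_mem h hsum hprod (n + 1)))
      (mul_mem hprod (mul_pow_sub_pow_mem h hc hsum hprod hdiff n))

end PowerSums

theorem stmt_9_general {R : Type*} [Ring R] [Algebra ℂ R] (α : ℂ)
    (k : ℕ) (x y z : R)
    (hxy : x * y = y * x) (hxz : x * z = z * x)
    (hyz : y * z = z * y)
    (hrel : x * y = α • z ^ (2 * k)) :
    ∀ t l : ℕ,
      z ^ t * (x ^ l + (-1 : R) ^ (t + l) * y ^ l) ∈
        Algebra.adjoin ℂ ({z ^ 2, x - y, z * (x + y)} : Set R) := by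
  set A := Algebra.adjoin ℂ ({z ^ 2, x - y, z * (x + y)} : Set R)
  have hz2 : z ^ 2 ∈ A := Algebra.subset_adjoin (by simp)
  have hsum : x + -y ∈ A := by rw [← sub_eq_add_neg]; exact Algebra.subset_adjoin (by simp)
  have hdiff : z * (x - -y) ∈ A := by rw [sub_neg_eq_add]; exact Algebra.subset_adjoin (by simp)
  have hprod : x * -y ∈ A := by
    rw [mul_neg, hrel, pow_mul]
    exact neg_mem (A.smul_mem (pow_mem hz2 k) α)
  have hcomm : Commute x (-y) := Commute.neg_right hxy
  have hz : Commute z (x * -y) := by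
    rw [mul_neg]; exact (Commute.mul_right hxz.symm hyz.symm).neg_right
  intro t l
  obtain ⟨r, rfl | rfl⟩ := Nat.even_or_odd' t
  · have hsign : (-1 : R) ^ (2 * r + l) * y ^ l = (-y) ^ l := by
      rw [pow_add, (even_two_mul r).neg_one_pow, one_mul, ← neg_pow]
    rw [hsign, pow_mul]
    exact mul_mem (pow_mem hz2 r) (pow_add_pow_mem hcomm hsum hprod l)
  · have hsign : (-1 : R) ^ (2 * r + 1 + l) * y ^ l = -(-y) ^ l := by
      rw [pow_add, (odd_two_mul_add_one r).neg_one_pow, neg_one_mul, neg_mul, ← neg_pow]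
    rw [hsign, ← sub_eq_add_neg, pow_succ, pow_mul, mul_assoc]
    exact mul_mem (pow_mem hz2 r) (mul_pow_sub_pow_mem hcomm hz hsum hprod hdiff l)

/-- Remark 1.8 of Ferraro–Kirkman–Moore–Won. -/
theorem stmt_9 {R : Type*} [Ring R] [Algebra ℂ R] (α : ℂ) (hα : α ≠ 0)
    (k : ℕ) (hk : 1 ≤ k) (x y z w : R)
    (hxy : x * y = y * x) (hxz : x * z = z * x) (hxw : x * w = w * x)
    (hyz : y * z = z * y) (hyw : y * w = w * y)
    (hrel : x * y = α • z ^ (2 * k)) :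
    ∀ t l : ℕ,
      z ^ t * (x ^ l + (-1 : R) ^ (t + l) * y ^ l) ∈
        Algebra.adjoin ℂ ({z ^ 2, x - y, z * (x + y)} : Set R) :=
  stmt_9_general α k x y z hxy hxz hyz hrel
end

section
/- Let R be a ℂ-algebra and let x, y ∈ R satisfy y*x = −x*y. Then for all nonnegative integers t and l, the element (x*y)^t * (x^l + (−1)^t * y^l) belongs to the ℂ-subalgebra of R generated by the two elements x + y and x*y*(x − y). -/
lemma aux_pow {R : Type*} [Ring R] {a b : R} (hab : a * b = -(b * a)) :
    ∀ (n : ℕ) (z : R), a * (b ^ n * z) = (-1 : R) ^ n * (b ^ n * (a * z)) := by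
  intro n
  induction n with
  | zero => intro z; simp
  | succ n ih =>
    intro z
    rw [pow_succ, pow_succ, mul_assoc (b^n) b z, ih (b * z)]
    have : a * (b * z) = -(b * (a * z)) := by rw [← mul_assoc, hab, neg_mul, mul_assoc]
    rw [this]
    simp [mul_neg, neg_mul, mul_assoc]

lemma aux_pow1 {R : Type*} [Ring R] {a b : R} (hab : a * b = -(b * a)) (n : ℕ) :
    a * b ^ n = (-1 : R) ^ n * (b ^ n * a) := by
  simpa using aux_pow hab n 1

lemma sign_cases {R : Type*} [Ring R] (n : ℕ) : (-1:R)^n = 1 ∨ (-1:R)^n = -1 := by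
  rcases Nat.even_or_odd n with hn | hn
  · exact Or.inl hn.neg_one_pow
  · exact Or.inr hn.neg_one_pow

lemma csame {R : Type*} [Monoid R] (a : R) (n : ℕ) (z : R) :
    a * (a ^ n * z) = a ^ n * (a * z) := by
  rw [← mul_assoc, ← pow_succ', pow_succ, mul_assoc]

lemma csame1 {R : Type*} [Monoid R] (a : R) (n : ℕ) :
    a * a ^ n = a ^ n * a := (pow_succ' a n).symm.trans (pow_succ a n)

section
variable {R : Type*} [Ring R] (x y : R) (h : y * x = -(x * y))

include h in
lemma hxw : x * (x * y) = -(x * y * x) := by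
  rw [mul_assoc, h]; simp [mul_assoc]

include h in
lemma hyw : y * (x * y) = -(x * y * y) := by
  rw [← mul_assoc, h]; simp

include h in
lemma hz : ∀ z : R, y * (x * z) = -(x * (y * z)) := by
  intro z; rw [← mul_assoc, h]; simp [mul_assoc]

include h in
lemma b2 : x^2 + y^2 = (x+y)*(x+y) := by
  have hzz := hz x y h
  simp only [pow_succ, pow_zero, one_mul, mul_add, add_mul, mul_assoc, h, hzz,
    csame, csame1, mul_neg, neg_mul, neg_neg, mul_one]
  abel

include h in
lemma b3 : x^3 + y^3 = (x+y)*((x+y)*(x+y)) + x*y*(x-y) := by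
  have hzz := hz x y h
  simp only [pow_succ, pow_zero, one_mul, mul_add, add_mul, mul_sub, sub_mul, mul_assoc,
    h, hzz, csame, csame1, mul_neg, neg_mul, neg_neg, mul_one]
  abel

include h in
lemma I1 (t m : ℕ) :
    (x*y)^(t+1) * (x^m + (-1:R)^(t+1) * y^m)
      = (x*y)^t * (x^(m+2) + (-1:R)^t * y^(m+2))
        - (-1:R)^t * ((x+y) * ((x*y)^t * (x^(m+1) + (-1:R)^t * y^(m+1)))) := by
  have cyx := aux_pow (a := y) (b := x) h
  have cyx1 := aux_pow1 (a := y) (b := x) h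
  have cxw := aux_pow (hxw x y h)
  have cyw := aux_pow (hyw x y h)
  have hzz := hz x y h
  rcases sign_cases (R := R) t with et | et <;> rcases sign_cases (R := R) m with em | em <;>
    simp only [pow_succ, et, em, mul_add, add_mul, mul_assoc, mul_neg, neg_mul, neg_neg,
      mul_one, one_mul, h, cyx, cyx1, cxw, cyw, hzz, csame, csame1] <;> abel

include h in
lemma I2 (t m : ℕ) :
    (2:R) * ((x*y)^(t+1) * (x^(m+2) + (-1:R)^(t+1) * y^(m+2)))
      = (-1:R)^t * ((x*y*(x-y)) * ((x*y)^t * (x^(m+1) + (-1:R)^t * y^(m+1))))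
        - (-1:R)^t * ((x+y) * ((x*y)^(t+1) * (x^(m+1) + (-1:R)^(t+1) * y^(m+1)))) := by
  have cyx := aux_pow (a := y) (b := x) h
  have cyx1 := aux_pow1 (a := y) (b := x) h
  have cxw := aux_pow (hxw x y h)
  have cyw := aux_pow (hyw x y h)
  have hzz := hz x y h
  rcases sign_cases (R := R) t with et | et <;> rcases sign_cases (R := R) m with em | em <;>
    simp only [two_mul, pow_succ, et, em, mul_add, add_mul, mul_sub, sub_mul, mul_assoc,
      mul_neg, neg_mul, neg_neg, mul_one, one_mul, h, cyx, cyx1, cxw, cyw, hzz, csame,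
      csame1] <;> abel
end

/-- Lemma 1.9 of Ferraro–Kirkman–Moore–Won: in `ℂ_{-1}[x,y]` the element
`(xy)^t (x^l + (-1)^t y^l)` is generated by `x + y` and `xy(x - y)`. -/
theorem stmt_10 {R : Type*} [Ring R] [Algebra ℂ R] (x y : R)
    (h : y * x = -(x * y)) :
    ∀ t l : ℕ,
      (x * y) ^ t * (x ^ l + (-1 : R) ^ t * y ^ l) ∈
        Algebra.adjoin ℂ ({x + y, x * y * (x - y)} : Set R) := by
  set A := Algebra.adjoin ℂ ({x + y, x * y * (x - y)} : Set R) with hA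
  have hs : (x+y) ∈ A := Algebra.subset_adjoin (by simp)
  have hc : x*y*(x-y) ∈ A := Algebra.subset_adjoin (by simp)
  have hne : ∀ u : ℕ, ((-1:R)^u) ∈ A := fun u => pow_mem (neg_mem (one_mem _)) u
  -- halving
  have half : ∀ a : R, (2:R) * a ∈ A → a ∈ A := by
    intro a ha
    have h2 : (2:R) = algebraMap ℂ R 2 := (map_ofNat _ 2).symm
    have : a = (2:ℂ)⁻¹ • ((2:R) * a) := by
      rw [h2, ← Algebra.smul_def, smul_smul]
      norm_num
    rw [this]
    exact Subalgebra.smul_mem _ ha _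
  suffices key : ∀ n t l, 5*t+2*l ≤ n →
      (x * y) ^ t * (x ^ l + (-1 : R) ^ t * y ^ l) ∈ A from
    fun t l => key (5*t+2*l) t l le_rfl
  intro n
  induction n with
  | zero =>
    intro t l hn
    obtain ⟨rfl, rfl⟩ : t = 0 ∧ l = 0 := by omega
    simp only [pow_zero, one_mul]
    exact add_mem (one_mem _) (one_mem _)
  | succ n ih =>
    intro t l hn
    obtain _ | u := t
    · obtain _ | _ | _ | _ | m := l
      · simp only [pow_zero, one_mul]
        exact add_mem (one_mem _) (one_mem _)
      · show (x*y)^0 * (x^1 + (-1:R)^0 * y^1) ∈ A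
        simpa using hs
      · show (x*y)^0 * (x^2 + (-1:R)^0 * y^2) ∈ A
        simp only [pow_zero, one_mul]
        rw [b2 x y h]
        exact mul_mem hs hs
      · show (x*y)^0 * (x^3 + (-1:R)^0 * y^3) ∈ A
        simp only [pow_zero, one_mul]
        rw [b3 x y h]
        exact add_mem (mul_mem hs (mul_mem hs hs)) hc
      · -- l = m + 4
        show (x*y)^0 * (x^(m+4) + (-1:R)^0 * y^(m+4)) ∈ A
        have e := I1 x y h 0 (m+2)
        rw [show m+2+2 = m+4 by omega, show m+2+1 = m+3 by omega] at e
        have e' : (x*y)^0 * (x^(m+4) + (-1:R)^0 * y^(m+4))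
            = (x*y)^(0+1) * (x^(m+2) + (-1:R)^(0+1) * y^(m+2))
              + (-1:R)^0 * ((x+y) * ((x*y)^0 * (x^(m+3) + (-1:R)^0 * y^(m+3)))) := by
          rw [e]; abel
        rw [e']
        have hF1 : (x*y)^(0+1) * (x^(m+2) + (-1:R)^(0+1) * y^(m+2)) ∈ A := by
          apply half
          rw [I2 x y h 0 m]
          exact sub_mem
            (mul_mem (hne 0) (mul_mem hc (ih 0 (m+1) (by omega))))
            (mul_mem (hne 0) (mul_mem hs (ih 1 (m+1) (by omega))))
        exact add_mem hF1
          (mul_mem (hne 0) (mul_mem hs (ih 0 (m+3) (by omega))))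
    · obtain _ | _ | m := l
      · rw [I1 x y h u 0]
        exact sub_mem (ih u 2 (by omega))
          (mul_mem (hne u) (mul_mem hs (ih u 1 (by omega))))
      · show (x*y)^(u+1) * (x^1 + (-1:R)^(u+1) * y^1) ∈ A
        rw [I1 x y h u 1]
        exact sub_mem (ih u 3 (by omega))
          (mul_mem (hne u) (mul_mem hs (ih u 2 (by omega))))
      · -- l = m + 2
        show (x*y)^(u+1) * (x^(m+2) + (-1:R)^(u+1) * y^(m+2)) ∈ A
        apply half
        rw [I2 x y h u m]
        exact sub_mem
          (mul_mem (hne u) (mul_mem hc (ih u (m+1) (by omega))))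
          (mul_mem (hne u) (mul_mem hs (ih (u+1) (m+1) (by omega))))
end
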